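/- arXiv:2401.01190 — 2 statements merged into one kernel-verified Lean document; each statement's English description precedes it below -/
import Mathlib

section
/- For every pairwise reciprocal matrix A of size n and every vector w : Fin n → ℝ, one has Ḡ.mulVec w = 0 if and only if w i = A i j · w j for all i, j (equivalently, if and only if the WLS objective vanishes at w). -/
open Matrix BigOperators

/-- A pairwise reciprocal matrix (PRM): all entries positive and `A i j * A j i = 1`. -/
def IsPRM {n : ℕ} (A : Matrix (Fin n) (Fin n) ℝ) : Prop :=
  ∀ i j, 0 < A i j ∧ A i j * A j i = 1

/-- The matrix `Ḡ` with diagonal `(n-1) + ∑_{k ≠ i} (A k i)^2` and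
off-diagonal `-(A i j + A j i)`. -/
noncomputable def Gbar {n : ℕ} (A : Matrix (Fin n) (Fin n) ℝ) :
    Matrix (Fin n) (Fin n) ℝ :=
  Matrix.of fun i j =>
    if i = j then ((n : ℝ) - 1) + ∑ k ∈ Finset.univ.filter (fun k => k ≠ i), (A k i) ^ 2
    else -(A i j + A j i)

/-- The all-ones matrix `J`. -/
noncomputable def Jmat (n : ℕ) : Matrix (Fin n) (Fin n) ℝ :=
  Matrix.of fun _ _ => 1

/-- `G = Ḡ + J`. -/
noncomputable def Gmat {n : ℕ} (A : Matrix (Fin n) (Fin n) ℝ) :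
    Matrix (Fin n) (Fin n) ℝ :=
  Gbar A + Jmat n

/-- The weighted least squares objective `f(w) = ∑ i ∑ j (w i - A i j * w j)^2`. -/
noncomputable def wls {n : ℕ} (A : Matrix (Fin n) (Fin n) ℝ) (w : Fin n → ℝ) : ℝ :=
  ∑ i, ∑ j, (w i - A i j * w j) ^ 2
lemma prm_diag {n : ℕ} {A : Matrix (Fin n) (Fin n) ℝ} (hA : IsPRM A) (i : Fin n) :
    A i i = 1 := by
  have h := hA i i
  nlinarith [h.1, h.2]

lemma gbar_row {n : ℕ} {A : Matrix (Fin n) (Fin n) ℝ} (hA : IsPRM A)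
    (w : Fin n → ℝ) (i : Fin n) :
    (Gbar A).mulVec w i
      = ∑ j, ((w i - A i j * w j) + A j i * (A j i * w i - w j)) := by
  have hsplit : ∀ f : Fin n → ℝ,
      ∑ j, f j = f i + ∑ j ∈ Finset.univ.erase i, f j := fun f =>
    (Finset.add_sum_erase _ f (Finset.mem_univ i)).symm
  have hii := prm_diag hA i
  rw [Matrix.mulVec, dotProduct, hsplit, hsplit fun j => ((w i - A i j * w j) + A j i * (A j i * w i - w j))]
  have hcard : ((Finset.univ : Finset (Fin n)).erase i).card = n - 1 := by
    simp [Finset.card_erase_of_mem]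
  have hn1 : ((n : ℝ) - 1) * w i = ∑ _j ∈ Finset.univ.erase i, w i := by
    rw [Finset.sum_const, hcard, nsmul_eq_mul]
    have : 1 ≤ n := i.pos
    push_cast [Nat.cast_sub this]
    ring
  simp only [Gbar, Matrix.of_apply, if_pos rfl, if_true, eq_self_iff_true, Finset.filter_ne']
  rw [add_mul, hn1, Finset.sum_mul, ← Finset.sum_add_distrib, ← Finset.sum_add_distrib]
  have : (w i - A i i * w i) + A i i * (A i i * w i - w i) = 0 := by rw [hii]; ring
  rw [this, zero_add]
  refine Finset.sum_congr rfl fun j hj => ?_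
  have hji : i ≠ j := fun h => (Finset.mem_erase.mp hj).1 h.symm
  rw [if_neg hji]
  ring

lemma quad_form {n : ℕ} {A : Matrix (Fin n) (Fin n) ℝ} (hA : IsPRM A)
    (w : Fin n → ℝ) : w ⬝ᵥ (Gbar A).mulVec w = wls A w := by
  unfold dotProduct wls
  have h1 : ∀ i, w i * (Gbar A).mulVec w i
      = ∑ j, (w i * (w i - A i j * w j) + w i * (A j i * (A j i * w i - w j))) := by
    intro i
    rw [gbar_row hA, Finset.mul_sum]
    exact Finset.sum_congr rfl fun j _ => by ring
  simp only [h1]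
  rw [show (∑ i, ∑ j, (w i * (w i - A i j * w j) + w i * (A j i * (A j i * w i - w j))))
      = (∑ i, ∑ j, w i * (w i - A i j * w j))
        + ∑ i, ∑ j, w i * (A j i * (A j i * w i - w j)) by
    rw [← Finset.sum_add_distrib]
    exact Finset.sum_congr rfl fun i _ => by rw [← Finset.sum_add_distrib]]
  rw [Finset.sum_comm (f := fun i j => w i * (A j i * (A j i * w i - w j))),
    ← Finset.sum_add_distrib]
  refine Finset.sum_congr rfl fun i _ => ?_
  rw [← Finset.sum_add_distrib]
  exact Finset.sum_congr rfl fun j _ => by ring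

/-- For every PRM `A` and every `w`, `Ḡ.mulVec w = 0` iff
`w i = A i j * w j` for all `i j`, equivalently iff the WLS objective vanishes at `w`. -/
theorem Gbar_mulVec_eq_zero_iff {n : ℕ} (hn : 1 ≤ n)
    (A : Matrix (Fin n) (Fin n) ℝ) (hA : IsPRM A) (w : Fin n → ℝ) :
    ((Gbar A).mulVec w = 0 ↔ ∀ i j, w i = A i j * w j) ∧
    ((Gbar A).mulVec w = 0 ↔ wls A w = 0) := by
  have hwls : wls A w = 0 ↔ ∀ i j, w i = A i j * w j := by
    unfold wls
    rw [Finset.sum_eq_zero_iff_of_nonneg fun i _ =>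
      Finset.sum_nonneg fun j _ => sq_nonneg _]
    constructor
    · intro h i j
      have := (Finset.sum_eq_zero_iff_of_nonneg fun j _ => sq_nonneg
        (w i - A i j * w j)).mp (h i (Finset.mem_univ i)) j (Finset.mem_univ j)
      have := (pow_eq_zero_iff (by norm_num : (2:ℕ) ≠ 0)).mp this
      linarith [sub_eq_zero.mp this]
    · intro h i _
      refine Finset.sum_eq_zero fun j _ => ?_
      rw [sub_eq_zero.mpr (h i j)]; simp
  have fwd : (Gbar A).mulVec w = 0 → wls A w = 0 := by
    intro h
    rw [← quad_form hA, h]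
    simp
  have bwd : (∀ i j, w i = A i j * w j) → (Gbar A).mulVec w = 0 := by
    intro h
    funext i
    rw [Pi.zero_apply, gbar_row hA]
    refine Finset.sum_eq_zero fun j _ => ?_
    have h1 : w i - A i j * w j = 0 := sub_eq_zero.mpr (h i j)
    have h2 : A j i * w i - w j = 0 := by
      rw [h j i]; ring
    rw [h1, h2]; ring
  exact ⟨⟨fun h => hwls.mp (fwd h), fun h => bwd h⟩,
    ⟨fwd, fun h => bwd (hwls.mp h)⟩⟩
end

section
/- For every pairwise reciprocal matrix A of size n ≥ 1, the matrix G = Ḡ + J is positive definite; in particular G is invertible. -/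
open Matrix BigOperators

/-! The quadratic form of `G` is `x ↦ wls A x + (∑ i, x i) ^ 2`, a sum of squares. If it vanishes
at `x`, then `x i = A i j * x j` for all `i, j`, so `∑ i, x i = (∑ i, A i j) * x j`; the column sum
is positive and the left side is zero, hence `x = 0`. -/

open Finset

variable {n : ℕ} {A : Matrix (Fin n) (Fin n) ℝ}

theorem IsPRM.diag_eq_one (hA : IsPRM A) (i : Fin n) : A i i = 1 := by
  obtain ⟨hpos, hrec⟩ := hA i i
  nlinarith

theorem Gbar_isSymm (A : Matrix (Fin n) (Fin n) ℝ) : (Gbar A).IsSymm := by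
  ext i j
  by_cases hij : i = j
  · subst hij; rfl
  · simp only [Gbar, transpose_apply, of_apply, if_neg hij, if_neg (Ne.symm hij), add_comm]

theorem Gmat_isHermitian (A : Matrix (Fin n) (Fin n) ℝ) : (Gmat A).IsHermitian :=
  isHermitian_iff_isSymm.mpr <| (Gbar_isSymm A).add rfl

theorem Gbar_eq_of_diag_eq_one (hA : ∀ i, A i i = 1) :
    Gbar A = diagonal (fun i => n + ∑ k, A k i ^ 2) - (A + Aᵀ) := by
  ext i j
  by_cases hij : i = j
  · subst hij
    rw [Gbar, of_apply, if_pos rfl, Matrix.sub_apply, diagonal_apply_eq, Matrix.add_apply,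
      transpose_apply, filter_ne', ← add_sum_erase _ _ (mem_univ i), hA i]
    ring
  · simp [Gbar, hij]

theorem wls_eq_dotProduct_mulVec (A : Matrix (Fin n) (Fin n) ℝ) (x : Fin n → ℝ) :
    wls A x = x ⬝ᵥ (diagonal (fun i => n + ∑ k, A k i ^ 2) - (A + Aᵀ)) *ᵥ x := by
  have hdiag (i : Fin n) :
      x i * ((n + ∑ k, A k i ^ 2) * x i) = ∑ j, (x i ^ 2 + A j i ^ 2 * x i ^ 2) := by
    simp [sum_add_distrib, ← sum_mul]; ring
  rw [sub_mulVec, add_mulVec, dotProduct_sub, dotProduct_add]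
  simp only [wls, dotProduct, mulVec, transpose_apply, diagonal_apply, ite_mul, zero_mul,
    sum_ite_eq, mem_univ, if_true, hdiag, mul_sum, ← sum_add_distrib, ← sum_sub_distrib]
  calc ∑ i, ∑ j, (x i - A i j * x j) ^ 2
      = ∑ i, ∑ j, (x i ^ 2 - x i * (A i j * x j))
          + ∑ i, ∑ j, (A i j ^ 2 * x j ^ 2 - x j * (A i j * x i)) := by
        simp only [← sum_add_distrib]
        exact sum_congr rfl fun i _ => sum_congr rfl fun j _ => by ring
    _ = ∑ i, ∑ j, (x i ^ 2 - x i * (A i j * x j))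
          + ∑ i, ∑ j, (A j i ^ 2 * x i ^ 2 - x i * (A j i * x j)) := by
        congr 1; exact sum_comm
    _ = _ := by
        simp only [← sum_add_distrib]
        exact sum_congr rfl fun i _ => sum_congr rfl fun j _ => by ring

theorem dotProduct_Jmat_mulVec (x : Fin n → ℝ) : x ⬝ᵥ Jmat n *ᵥ x = (∑ i, x i) ^ 2 := by
  simp [Jmat, dotProduct, mulVec, ← sum_mul, sq]

theorem dotProduct_Gmat_mulVec (hA : IsPRM A) (x : Fin n → ℝ) :
    x ⬝ᵥ Gmat A *ᵥ x = wls A x + (∑ i, x i) ^ 2 := by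
  rw [Gmat, add_mulVec, dotProduct_add, Gbar_eq_of_diag_eq_one hA.diag_eq_one,
    wls_eq_dotProduct_mulVec, dotProduct_Jmat_mulVec]

theorem wls_nonneg (A : Matrix (Fin n) (Fin n) ℝ) (x : Fin n → ℝ) : 0 ≤ wls A x :=
  sum_nonneg fun _ _ => sum_nonneg fun _ _ => sq_nonneg _

theorem wls_eq_zero_iff {x : Fin n → ℝ} : wls A x = 0 ↔ ∀ i j, x i = A i j * x j := by
  simp [wls, sum_eq_zero_iff_of_nonneg, sq_nonneg, sum_nonneg, sub_eq_zero]

theorem eq_zero_of_wls_eq_zero_of_sum_eq_zero (hA : ∀ i j, 0 < A i j) {x : Fin n → ℝ}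
    (hwls : wls A x = 0) (hsum : ∑ i, x i = 0) : x = 0 := by
  funext j
  have hcol : ∑ i, x i = (∑ i, A i j) * x j := by
    rw [sum_mul]; exact sum_congr rfl fun i _ => wls_eq_zero_iff.mp hwls i j
  have hpos : 0 < ∑ i, A i j := sum_pos (fun i _ => hA i j) ⟨j, mem_univ j⟩
  rw [hcol] at hsum
  exact (mul_eq_zero.mp hsum).resolve_left hpos.ne'

theorem Gmat_posDef_and_isUnit_general {n : ℕ}
    (A : Matrix (Fin n) (Fin n) ℝ) (hA : IsPRM A) :
    (Gmat A).PosDef ∧ IsUnit (Gmat A) := by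
  have hpd : (Gmat A).PosDef := by
    refine .of_dotProduct_mulVec_pos (Gmat_isHermitian A) fun x hx => ?_
    rw [star_trivial, dotProduct_Gmat_mulVec hA]
    by_contra! hle
    have hwls := wls_nonneg A x
    have hsq := sq_nonneg (∑ i, x i)
    exact hx <| eq_zero_of_wls_eq_zero_of_sum_eq_zero (fun i j => (hA i j).1) (by linarith)
      (pow_eq_zero_iff two_ne_zero |>.mp (by linarith))
  exact ⟨hpd, hpd.isUnit⟩

/-- For every PRM `A` of size `n ≥ 1`, the matrix `G = Ḡ + J` is positive
definite; in particular `G` is invertible. -/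
theorem Gmat_posDef_and_isUnit {n : ℕ} (hn : 1 ≤ n)
    (A : Matrix (Fin n) (Fin n) ℝ) (hA : IsPRM A) :
    (Gmat A).PosDef ∧ IsUnit (Gmat A) :=
  Gmat_posDef_and_isUnit_general A hA
end
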